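/- arXiv:2302.11829 — 5 statements merged into one kernel-verified Lean document; each statement's English description precedes it below -/
import Mathlib

section
/- Let u^L : Fin m → Fin n → ℝ be a leader payoff function and (x,j) ∈ Δ_m × [n] a strategy profile. Then (x,j) is inducible with respect to u^L — i.e., there exists a follower payoff function ũ^F : Fin m → Fin n → ℝ such that (x,j) is a strong Stackelberg equilibrium of (u^L, ũ^F) — if and only if u^L(x,j) ≥ M_{[n]} = max_{y∈Δ_m} min_{k∈[n]} u^L(y,k). -/
open scoped Classical
open Finset

noncomputable section

/-- The leader's mixed-strategy simplex Δ_m. -/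
def simplex (m : ℕ) : Set (Fin m → ℝ) := stdSimplex ℝ (Fin m)

/-- Linear extension of a payoff matrix to mixed strategies: u(x,j) = ∑ i, x i * u i j. -/
def pay {m n : ℕ} (u : Fin m → Fin n → ℝ) (x : Fin m → ℝ) (j : Fin n) : ℝ :=
  ∑ i, x i * u i j

/-- Inner product on ℝ^m. -/
def dot {m : ℕ} (a x : Fin m → ℝ) : ℝ := ∑ i, a i * x i

/-- min_{j ∈ S} u(x, j). -/
def minOnS {m n : ℕ} (u : Fin m → Fin n → ℝ) (S : Set (Fin n)) (x : Fin m → ℝ) : ℝ :=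
  sInf ((fun j => pay u x j) '' S)

/-- The leader's maximin value M_S = max_{x∈Δ_m} min_{j∈S} u(x,j). -/
def Mval {m n : ℕ} (u : Fin m → Fin n → ℝ) (S : Set (Fin n)) : ℝ :=
  sSup (minOnS u S '' simplex m)

/-- The set 𝓜_S of maximin strategies. -/
def argMM {m n : ℕ} (u : Fin m → Fin n → ℝ) (S : Set (Fin n)) : Set (Fin m → ℝ) :=
  {x ∈ simplex m | minOnS u S x = Mval u S}

/-- The follower's best-response set BR(x) = argmax_j uF(x,j). -/
def BR {m n : ℕ} (uF : Fin m → Fin n → ℝ) (x : Fin m → ℝ) : Set (Fin n) :=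
  {j | ∀ j', pay uF x j' ≤ pay uF x j}

/-- Strong Stackelberg equilibrium of the game (uL, uF). -/
def SSE {m n : ℕ} (uL uF : Fin m → Fin n → ℝ) (x : Fin m → ℝ) (j : Fin n) : Prop :=
  x ∈ simplex m ∧ j ∈ BR uF x ∧
    ∀ x' ∈ simplex m, ∀ j' ∈ BR uF x', pay uL x' j' ≤ pay uL x j

/-- (x, j) is inducible with respect to the leader payoff uL. -/
def Inducible {m n : ℕ} (uL : Fin m → Fin n → ℝ) (x : Fin m → ℝ) (j : Fin n) : Prop :=
  ∃ uF : Fin m → Fin n → ℝ, SSE uL uF x j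

/-- μ is a (maximin-)cover of S w.r.t. uL: max_{x∈𝓜_S} max_{j∈BR(x)} uL(x,j) < M_S. -/
def IsCover {m n : ℕ} (uL μ : Fin m → Fin n → ℝ) (S : Set (Fin n)) : Prop :=
  ∀ x ∈ argMM uL S, ∀ j ∈ BR μ x, pay uL x j < Mval uL S

/-- μ is a proper cover of S w.r.t. uL. -/
def IsProperCover {m n : ℕ} (uL μ : Fin m → Fin n → ℝ) (S : Set (Fin n)) : Prop :=
  IsCover uL μ S ∧ ∀ x ∈ simplex m, ∀ j ∈ S, j ∉ BR μ x
/-!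
(⇒) Every leader strategy `y` meets some follower best response `k`, and
`min_k u^L(y, k) ≤ u^L(y, k) ≤ u^L(x, j)`.

(⇐) By von Neumann's minimax theorem the follower has a mixed strategy `q` with
`u^L(y, q) ≤ M ≤ v := u^L(x, j)` for every `y`. Writing `p = (u^L(y, l))_l`, the follower payoffs
are affine in `p`, hence in `y`: action `j` gets `v - p_j`; the actions `l ≠ j` with `q_l > 0` form
a chain, each getting the sum of `q_l (p_l - v)` over its predecessors; all others get `-1`.
A best response in the chain is not beaten by its successor, so its own term `q_k (p_k - v)` is
`≤ 0`; after the last link, `Σ_l q_l (p_l - v) ≤ 0` plays the role of the successor. Putting the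
actions with `u^L(x, l) ≤ v` first bounds every prefix sum at `x` by `max 0 total ≤ 0`, which is
the payoff of `j` at `x`.
-/

open Matrix

theorem exists_isSaddlePointOn_stdSimplex {ι κ : Type*} [Fintype ι] [Fintype κ] [Nonempty ι]
    [Nonempty κ] (A : Matrix ι κ ℝ) :
    ∃ q ∈ stdSimplex ℝ κ, ∃ y ∈ stdSimplex ℝ ι,
      IsSaddlePointOn (stdSimplex ℝ κ) (stdSimplex ℝ ι) (fun q y => y ⬝ᵥ A *ᵥ q) q y := by
  refine Sion.exists_isSaddlePointOn ⟨_, single_mem_stdSimplex ℝ (Classical.arbitrary κ)⟩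
    (convex_stdSimplex ℝ κ) (isCompact_stdSimplex ℝ κ) (fun y _ => ?_) (fun y _ => ?_)
    (convex_stdSimplex ℝ ι) ⟨_, single_mem_stdSimplex ℝ (Classical.arbitrary ι)⟩
    (isCompact_stdSimplex ℝ ι) (fun q _ => ?_) (fun q _ => ?_)
  · exact (dotProductBilin ℝ ℝ y ∘ₗ A.mulVecLin).continuous_of_finiteDimensional.continuousOn
      |>.lowerSemicontinuousOn
  · exact ((dotProductBilin ℝ ℝ y ∘ₗ A.mulVecLin).convexOn (convex_stdSimplex ℝ κ)).quasiconvexOn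
  · exact ((dotProductBilin ℝ ℝ).flip (A *ᵥ q)).continuous_of_finiteDimensional.continuousOn
      |>.upperSemicontinuousOn
  · exact (((dotProductBilin ℝ ℝ).flip (A *ᵥ q)).concaveOn (convex_stdSimplex ℝ ι)).quasiconcaveOn

theorem AffineMap.finset_sum_apply {k V₁ P₁ V₂ α : Type*} [Ring k] [AddCommGroup V₁]
    [Module k V₁] [AddTorsor V₁ P₁] [AddCommGroup V₂] [Module k V₂] (s : Finset α)
    (f : α → P₁ →ᵃ[k] V₂) (p : P₁) : (∑ a ∈ s, f a) p = ∑ a ∈ s, f a p :=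
  map_sum (AddMonoidHom.mk' (fun g : P₁ →ᵃ[k] V₂ => g p) fun _ _ => rfl) _ _

def coordSub {ι : Type*} (v : ℝ) (l : ι) : (ι → ℝ) →ᵃ[ℝ] ℝ :=
  AffineMap.proj (V := fun _ => ℝ) (P := fun _ => ℝ) l - AffineMap.const ℝ _ v

@[simp]
lemma coordSub_apply {ι : Type*} (v : ℝ) (l : ι) (p : ι → ℝ) : coordSub v l p = p l - v := rfl

section PrefixSum

variable {ι κ : Type*} [LinearOrder κ]

def prefixSum (r : ι → κ) (G : Finset ι) (a : ι → ℝ) (k : ι) : ℝ :=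
  ∑ l ∈ G with r l < r k, a l

variable {r : ι → κ} {G : Finset ι} {a : ι → ℝ} {k : ι}

lemma prefixSum_eq_zero_of_forall_le (h : ∀ l ∈ G, r k ≤ r l) : prefixSum r G a k = 0 := by
  rw [prefixSum, filter_false_of_mem fun l hl => not_lt.2 (h l hl), sum_empty]

lemma prefixSum_add_self (hr : Function.Injective r) (hk : k ∈ G) :
    prefixSum r G a k + a k = ∑ l ∈ G with r l ≤ r k, a l := by
  have hins : {l ∈ G | r l ≤ r k} = insert k {l ∈ G | r l < r k} := by
    ext l
    simp only [mem_filter, mem_insert, le_iff_lt_or_eq, hr.eq_iff]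
    grind
  rw [hins, sum_insert (by simp), prefixSum, add_comm]

lemma exists_prefixSum_eq_or_sum_eq :
    (∃ k' ∈ G, prefixSum r G a k' = ∑ l ∈ G with r l ≤ r k, a l) ∨
      ∑ l ∈ G with r l ≤ r k, a l = ∑ l ∈ G, a l := by
  by_cases h : ∃ l ∈ G, r k < r l
  · obtain ⟨k', hk', hmin⟩ :=
      exists_min_image {l ∈ G | r k < r l} r (by simpa [Finset.Nonempty] using h)
    rw [mem_filter] at hk'
    refine Or.inl ⟨k', hk'.1, sum_congr (filter_congr fun l hl => ?_) fun _ _ => rfl⟩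
    refine ⟨fun hlk' => not_lt.1 fun hkl => ?_, fun hlk => hlk.trans_lt hk'.2⟩
    exact (hmin l (mem_filter.2 ⟨hl, hkl⟩)).not_gt hlk'
  · push Not at h
    exact Or.inr (by rw [filter_true_of_mem h])

lemma prefixSum_le_max (hup : ∀ l ∈ G, ∀ l' ∈ G, 0 < a l → r l < r l' → 0 < a l') (k : ι) :
    prefixSum r G a k ≤ max 0 (∑ l ∈ G, a l) := by
  by_cases h : ∃ l ∈ G, r l < r k ∧ 0 < a l
  · obtain ⟨l, hl, hlk, hpos⟩ := h
    refine le_max_of_le_right ?_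
    rw [← sum_filter_add_sum_filter_not G (fun l => r l < r k)]
    refine le_add_of_nonneg_right (sum_nonneg fun l' hl' => ?_)
    rw [mem_filter, not_lt] at hl'
    exact (hup l hl l' hl'.1 hpos (hlk.trans_le hl'.2)).le
  · push Not at h
    exact le_max_of_le_left (sum_nonpos fun l hl => h l (mem_filter.1 hl).1 (mem_filter.1 hl).2)

end PrefixSum

section SignKey

variable {ι : Type*}

def signKey (a : ι → ℝ) (k : ι) : Bool ×ₗ ι := toLex (decide (0 < a k), k)

lemma signKey_injective (a : ι → ℝ) : Function.Injective (signKey a) :=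
  fun _ _ h => congrArg Prod.snd (toLex.injective h)

lemma pos_of_signKey_lt [LT ι] {a : ι → ℝ} {l l' : ι} (hl : 0 < a l)
    (h : signKey a l < signKey a l') : 0 < a l' := by
  by_contra hl'
  simp [signKey, Prod.Lex.lt_iff, hl, hl'] at h
  exact absurd h (by decide)

end SignKey

lemma mul_le_max_zero {c : ℝ} (hc₀ : 0 ≤ c) (hc₁ : c ≤ 1) (t : ℝ) : c * t ≤ max 0 t := by
  rcases le_total 0 t with h | h
  · exact (mul_le_of_le_one_left h hc₁).trans (le_max_right _ _)
  · exact (mul_nonpos_of_nonneg_of_nonpos hc₀ h).trans (le_max_left _ _)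

section ChainResponse

variable {ι κ : Type*} [Fintype ι] [LinearOrder κ] {q p : ι → ℝ} {v : ℝ} {j k : ι}

def chainSupport (q : ι → ℝ) (j : ι) : Finset ι := {l | l ≠ j ∧ 0 < q l}

lemma mem_chainSupport {l : ι} : l ∈ chainSupport q j ↔ l ≠ j ∧ 0 < q l := by
  simp [chainSupport]

lemma sum_chainSupport_le (hq : q ∈ stdSimplex ℝ ι) (hp : p ⬝ᵥ q ≤ v) :
    ∑ l ∈ chainSupport q j, q l * (p l - v) ≤ q j * (v - p j) := by
  have htotal : ∑ l, q l * (p l - v) = p ⬝ᵥ q - v := by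
    simp only [dotProduct, mul_sub, sum_sub_distrib, ← sum_mul, hq.2, one_mul, mul_comm (p _)]
  have hrest : ∑ l ∈ univ with l ∉ chainSupport q j, q l * (p l - v) = q j * (p j - v) := by
    refine sum_eq_single_of_mem j (by simp [mem_chainSupport]) fun l hl hlj => ?_
    have hql : q l = 0 := le_antisymm
      (not_lt.1 fun hpos => (mem_filter.1 hl).2 (mem_chainSupport.2 ⟨hlj, hpos⟩)) (hq.1 l)
    rw [hql, zero_mul]
  have := sum_filter_add_sum_filter_not univ (· ∈ chainSupport q j) fun l => q l * (p l - v)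
  rw [filter_mem_eq_inter, univ_inter, hrest, htotal] at this
  linarith

def chainResponse (q : ι → ℝ) (v : ℝ) (j : ι) (r : ι → κ) (k : ι) : (ι → ℝ) →ᵃ[ℝ] ℝ :=
  if k = j then -coordSub v j
  else if k ∈ chainSupport q j then ∑ l ∈ chainSupport q j with r l < r k, q l • coordSub v l
  else AffineMap.const ℝ _ (-1)

lemma chainResponse_apply (r : ι → κ) (p : ι → ℝ) (k : ι) :
    chainResponse q v j r k p = if k = j then v - p j
      else if k ∈ chainSupport q j then prefixSum r (chainSupport q j) (fun l => q l * (p l - v)) k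
      else -1 := by
  unfold chainResponse
  split_ifs <;> simp [prefixSum, AffineMap.finset_sum_apply]

lemma exists_chainResponse_nonneg (r : ι → κ) (hq : q ∈ stdSimplex ℝ ι) (hp : p ⬝ᵥ q ≤ v) :
    ∃ k, 0 ≤ chainResponse q v j r k p := by
  rcases (chainSupport q j).eq_empty_or_nonempty with hG | hG
  · have hqj : q j = 1 := by
      rw [← hq.2, sum_eq_single j (fun l _ hlj => ?_) (by simp)]
      have hl : l ∉ chainSupport q j := by simp [hG]
      exact le_antisymm (not_lt.1 fun hpos => hl (mem_chainSupport.2 ⟨hlj, hpos⟩)) (hq.1 l)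
    have := sum_chainSupport_le (j := j) hq hp
    rw [hG, sum_empty, hqj, one_mul] at this
    exact ⟨j, by simpa [chainResponse_apply] using this⟩
  · obtain ⟨g, hg, hmin⟩ := exists_min_image _ r hG
    refine ⟨g, ?_⟩
    rw [chainResponse_apply, if_neg (mem_chainSupport.1 hg).1, if_pos hg,
      prefixSum_eq_zero_of_forall_le hmin]

lemma le_of_forall_chainResponse_le {r : ι → κ} (hr : Function.Injective r)
    (hq : q ∈ stdSimplex ℝ ι) (hp : p ⬝ᵥ q ≤ v)
    (hk : ∀ k', chainResponse q v j r k' p ≤ chainResponse q v j r k p) : p k ≤ v := by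
  set G := chainSupport q j
  obtain ⟨B, hB⟩ : ∃ B, chainResponse q v j r k p = B := ⟨_, rfl⟩
  rw [hB] at hk
  have hF := chainResponse_apply (q := q) (v := v) (j := j) r p
  have hFG : ∀ l ∈ G, chainResponse q v j r l p = prefixSum r G (fun l => q l * (p l - v)) l :=
    fun l hl => by rw [hF, if_neg (mem_chainSupport.1 hl).1, if_pos hl]
  have hjB : v - p j ≤ B := by simpa [hF] using hk j
  have h0B : 0 ≤ B :=
    let ⟨k', hk'⟩ := exists_chainResponse_nonneg r hq hp
    hk'.trans (hk k')
  by_cases hkj : k = j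
  · rw [hF, if_pos hkj] at hB
    rw [hkj]
    linarith
  by_cases hkG : k ∈ G
  swap
  · rw [hF, if_neg hkj, if_neg hkG] at hB
    linarith
  -- the prefix closed at `k` is the payoff of the next link, or the total after the last one
  have hclosed : ∑ l ∈ G with r l ≤ r k, q l * (p l - v) ≤ B := by
    rcases exists_prefixSum_eq_or_sum_eq (r := r) (G := G) (k := k)
        (a := fun l => q l * (p l - v)) with ⟨k', hk', he⟩ | he
    · rw [← he, ← hFG k' hk']
      exact hk k'
    · rw [he]
      obtain ⟨hqj0, hqj1⟩ := mem_Icc_of_mem_stdSimplex hq j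
      exact (sum_chainSupport_le hq hp).trans
        ((mul_le_max_zero hqj0 hqj1 _).trans (max_le h0B hjB))
  rw [← prefixSum_add_self hr hkG, ← hFG k hkG, hB] at hclosed
  have hqk := (mem_chainSupport.1 hkG).2
  nlinarith

lemma chainResponse_le_target_of_sorted {r : ι → κ} (hq : q ∈ stdSimplex ℝ ι)
    (hp : p ⬝ᵥ q ≤ p j)
    (hr : ∀ l l', 0 < q l * (p l - p j) → r l < r l' → 0 < q l' * (p l' - p j)) (k : ι) :
    chainResponse q (p j) j r k p ≤ chainResponse q (p j) j r j p := by
  rw [chainResponse_apply, chainResponse_apply, if_pos rfl, sub_self]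
  split_ifs with hkj hkG
  · exact le_rfl
  · refine (prefixSum_le_max (fun l _ l' _ => hr l l') k).trans (max_le le_rfl ?_)
    simpa using sum_chainSupport_le (j := j) hq hp
  · norm_num

end ChainResponse

theorem exists_affineMap_family_inducing {ι : Type*} [Fintype ι] [LinearOrder ι]
    {q p₀ : ι → ℝ} (hq : q ∈ stdSimplex ℝ ι) {j : ι} (hp₀ : p₀ ⬝ᵥ q ≤ p₀ j) :
    ∃ F : ι → (ι → ℝ) →ᵃ[ℝ] ℝ, (∀ k, F k p₀ ≤ F j p₀) ∧
      ∀ p, p ⬝ᵥ q ≤ p₀ j → ∀ k, (∀ k', F k' p ≤ F k p) → p k ≤ p₀ j :=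
  ⟨chainResponse q (p₀ j) j (signKey fun l => q l * (p₀ l - p₀ j)),
    chainResponse_le_target_of_sorted hq hp₀ fun _ _ =>
      pos_of_signKey_lt (a := fun l => q l * (p₀ l - p₀ j)),
    fun _ hp _ hk => le_of_forall_chainResponse_le (signKey_injective _) hq hp hk⟩

section Game

variable {m n : ℕ} (u : Fin m → Fin n → ℝ)

lemma pay_affineMap_comp {y : Fin m → ℝ} (hy : y ∈ simplex m)
    (F : Fin n → (Fin n → ℝ) →ᵃ[ℝ] ℝ) (k : Fin n) :
    pay (fun i k => F k (u i)) y k = F k (fun l => pay u y l) := by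
  have hcomb : (fun l => pay u y l) = univ.affineCombination ℝ u y := by
    rw [Finset.affineCombination_eq_linear_combination _ _ _ hy.2]
    ext l
    simp [pay]
  rw [hcomb, Finset.map_affineCombination _ _ _ hy.2,
    Finset.affineCombination_eq_linear_combination _ _ _ hy.2]
  simp [pay]

lemma minOnS_univ_le_pay (y : Fin m → ℝ) (k : Fin n) : minOnS u Set.univ y ≤ pay u y k :=
  csInf_le (Set.toFinite _).bddBelow ⟨k, trivial, rfl⟩

variable [Nonempty (Fin n)]

lemma exists_pay_eq_minOnS_univ (y : Fin m → ℝ) : ∃ k, pay u y k = minOnS u Set.univ y := by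
  obtain ⟨k, -, hk⟩ := (Set.univ_nonempty.image fun k => pay u y k).csInf_mem (Set.toFinite _)
  exact ⟨k, hk⟩

lemma bddAbove_minOnS_univ_image : BddAbove (minOnS u Set.univ '' simplex m) := by
  obtain ⟨k⟩ := ‹Nonempty (Fin n)›
  refine ⟨∑ i, |u i k|, ?_⟩
  rintro _ ⟨y, hy, rfl⟩
  refine (minOnS_univ_le_pay u y k).trans (sum_le_sum fun i _ => ?_)
  obtain ⟨hy0, hy1⟩ := mem_Icc_of_mem_stdSimplex hy i
  calc y i * u i k ≤ y i * |u i k| := mul_le_mul_of_nonneg_left (le_abs_self _) hy0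
    _ ≤ |u i k| := mul_le_of_le_one_left (abs_nonneg _) hy1

lemma minOnS_univ_le_Mval {y : Fin m → ℝ} (hy : y ∈ simplex m) :
    minOnS u Set.univ y ≤ Mval u Set.univ :=
  le_csSup (bddAbove_minOnS_univ_image u) ⟨y, hy, rfl⟩

lemma exists_mem_BR (uF : Fin m → Fin n → ℝ) (y : Fin m → ℝ) : ∃ k, k ∈ BR uF y :=
  Finite.exists_max _

lemma exists_stdSimplex_forall_dotProduct_le_Mval [Nonempty (Fin m)] :
    ∃ q ∈ stdSimplex ℝ (Fin n), ∀ y ∈ simplex m, (fun k => pay u y k) ⬝ᵥ q ≤ Mval u Set.univ := by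
  obtain ⟨q, hq, z, hz, hsaddle⟩ := exists_isSaddlePointOn_stdSimplex (Matrix.of u)
  obtain ⟨k, hk⟩ := exists_pay_eq_minOnS_univ u z
  refine ⟨q, hq, fun y hy => ?_⟩
  calc (fun k => pay u y k) ⬝ᵥ q = y ⬝ᵥ Matrix.of u *ᵥ q := (dotProduct_mulVec _ _ _).symm
    _ ≤ z ⬝ᵥ Matrix.of u *ᵥ Pi.single k 1 := hsaddle _ (single_mem_stdSimplex ℝ k) y hy
    _ = pay u z k := by rw [dotProduct_mulVec, dotProduct_single, mul_one]; rfl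
    _ ≤ Mval u Set.univ := hk ▸ minOnS_univ_le_Mval u hz

end Game

lemma Inducible.Mval_le {m n : ℕ} {uL : Fin m → Fin n → ℝ} {x : Fin m → ℝ} {j : Fin n}
    (h : Inducible uL x j) : Mval uL Set.univ ≤ pay uL x j := by
  obtain ⟨uF, hx, -, hopt⟩ := h
  have : Nonempty (Fin n) := ⟨j⟩
  refine csSup_le ⟨_, x, hx, rfl⟩ ?_
  rintro _ ⟨y, hy, rfl⟩
  obtain ⟨k, hk⟩ := exists_mem_BR uF y
  exact (minOnS_univ_le_pay uL y k).trans (hopt y hy k hk)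

lemma inducible_of_Mval_le {m n : ℕ} {uL : Fin m → Fin n → ℝ} {x : Fin m → ℝ} {j : Fin n}
    (hx : x ∈ simplex m) (h : Mval uL Set.univ ≤ pay uL x j) : Inducible uL x j := by
  have : Nonempty (Fin n) := ⟨j⟩
  have : Nonempty (Fin m) := by
    obtain ⟨i, -⟩ := nonempty_of_sum_ne_zero (hx.2.symm ▸ one_ne_zero : ∑ i, x i ≠ 0)
    exact ⟨i⟩
  obtain ⟨q, hq, hqM⟩ := exists_stdSimplex_forall_dotProduct_le_Mval uL
  have hv : ∀ y ∈ simplex m, (fun k => pay uL y k) ⬝ᵥ q ≤ pay uL x j :=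
    fun y hy => (hqM y hy).trans h
  obtain ⟨F, hFx, hFsafe⟩ :=
    exists_affineMap_family_inducing hq (p₀ := fun k => pay uL x k) (hv x hx)
  refine ⟨fun i k => F k (uL i), hx, fun k => ?_, fun y hy k hk => hFsafe _ (hv y hy) k fun k' => ?_⟩
  · simpa only [pay_affineMap_comp uL hx] using hFx k
  · simpa only [pay_affineMap_comp uL hy] using hk k'

theorem inducible_iff_ge_maximin_general {m n : ℕ}
    (uL : Fin m → Fin n → ℝ) (x : Fin m → ℝ) (hx : x ∈ simplex m) (j : Fin n) :
    Inducible uL x j ↔ Mval uL Set.univ ≤ pay uL x j :=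
  ⟨Inducible.Mval_le, inducible_of_Mval_le hx⟩

/-- Birmpas et al. characterization:
(x,j) is inducible w.r.t. u^L iff u^L(x,j) ≥ M_{[n]}. -/
theorem inducible_iff_ge_maximin {m n : ℕ} (hm : 0 < m) (hn : 0 < n)
    (uL : Fin m → Fin n → ℝ) (x : Fin m → ℝ) (hx : x ∈ simplex m) (j : Fin n) :
    Inducible uL x j ↔ Mval uL Set.univ ≤ pay uL x j :=
  inducible_iff_ge_maximin_general uL x hx j
end
end

section
/- For any nonempty subset S ⊆ [n] of the follower's actions, if there exists a cover of S with respect to u^L, then there exists a proper cover of S with respect to u^L. -/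
open scoped Classical
open Finset

noncomputable section

/-! Penalise every action of `S` by more than the range of `uL` on the simplex and let the
follower otherwise minimise the leader's payoff. This follower never responds inside `S` once
some action lies outside `S`, which a cover guarantees: a best response to `μ` at a maximin
strategy cannot lie in `S`. At a maximin strategy `x` it then earns the leader at most what a
best response to `μ` at `x` does, and that is below `M_S`. -/

variable {m n : ℕ}

lemma continuous_pay (u : Fin m → Fin n → ℝ) (j : Fin n) :
    Continuous fun x : Fin m → ℝ => pay u x j := by
  unfold pay
  fun_prop

lemma pay_const_sub {x : Fin m → ℝ} (hx : x ∈ simplex m) (c : Fin n → ℝ)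
    (u : Fin m → Fin n → ℝ) (j : Fin n) :
    pay (fun i j => c j - u i j) x j = c j - pay u x j := by
  simp only [pay, mul_sub, Finset.sum_sub_distrib, ← Finset.sum_mul, hx.2, one_mul]

def payBound (u : Fin m → Fin n → ℝ) : ℝ := ∑ i, ∑ j, |u i j|

lemma abs_pay_le_payBound {x : Fin m → ℝ} (hx : x ∈ simplex m) (u : Fin m → Fin n → ℝ)
    (j : Fin n) : |pay u x j| ≤ payBound u :=
  calc |pay u x j| ≤ ∑ i, |x i * u i j| := Finset.abs_sum_le_sum_abs _ _
    _ ≤ ∑ i, ∑ j', |u i j'| := by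
      gcongr with i
      obtain ⟨hx0, hx1⟩ := mem_Icc_of_mem_stdSimplex hx i
      calc |x i * u i j| = x i * |u i j| := by rw [abs_mul, abs_of_nonneg hx0]
        _ ≤ |u i j| := mul_le_of_le_one_left (abs_nonneg _) hx1
        _ ≤ ∑ j', |u i j'| :=
          Finset.single_le_sum (f := fun j' => |u i j'|) (fun _ _ => abs_nonneg _)
            (Finset.mem_univ j)

lemma minOnS_le_pay (u : Fin m → Fin n → ℝ) {S : Set (Fin n)} {j : Fin n} (hj : j ∈ S)
    (x : Fin m → ℝ) : minOnS u S x ≤ pay u x j :=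
  csInf_le (S.toFinite.image _).bddBelow ⟨j, hj, rfl⟩

lemma continuous_minOnS (u : Fin m → Fin n → ℝ) {S : Set (Fin n)} (hS : S.Nonempty) :
    Continuous (minOnS u S) := by
  have hne : S.toFinset.Nonempty := Set.toFinset_nonempty.2 hS
  have h : minOnS u S = fun x => S.toFinset.inf' hne (fun j => pay u x j) := by
    funext x
    simp [minOnS, Finset.inf'_eq_csInf_image, Set.coe_toFinset]
  rw [h]
  exact Continuous.finset_inf'_apply hne fun j _ => continuous_pay u j

lemma argMM_nonempty (hm : 0 < m) (u : Fin m → Fin n → ℝ) {S : Set (Fin n)}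
    (hS : S.Nonempty) : (argMM u S).Nonempty := by
  obtain ⟨x, hx, hmax⟩ := (isCompact_stdSimplex ℝ (Fin m)).exists_sSup_image_eq
    ⟨_, ite_eq_mem_stdSimplex ℝ (⟨0, hm⟩ : Fin m)⟩ (continuous_minOnS u hS).continuousOn
  exact ⟨x, hx, hmax.symm⟩

lemma BR_nonempty [Nonempty (Fin n)] (μ : Fin m → Fin n → ℝ) (x : Fin m → ℝ) :
    (BR μ x).Nonempty :=
  Finite.exists_max (pay μ x)

lemma IsCover.notMem_of_mem_BR {uL μ : Fin m → Fin n → ℝ} {S : Set (Fin n)}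
    (hμ : IsCover uL μ S) {x : Fin m → ℝ} (hx : x ∈ argMM uL S) {j : Fin n}
    (hj : j ∈ BR μ x) : j ∉ S := fun hjS =>
  (hμ x hx j hj).not_ge (hx.2 ▸ minOnS_le_pay uL hjS x)

def antagonist (uL : Fin m → Fin n → ℝ) (S : Set (Fin n)) : Fin m → Fin n → ℝ :=
  fun i j => (if j ∈ S then 0 else 2 * payBound uL + 1) - uL i j

lemma pay_antagonist {uL : Fin m → Fin n → ℝ} {S : Set (Fin n)} {x : Fin m → ℝ}
    (hx : x ∈ simplex m) (j : Fin n) :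
    pay (antagonist uL S) x j = (if j ∈ S then 0 else 2 * payBound uL + 1) - pay uL x j :=
  pay_const_sub hx (fun j => if j ∈ S then 0 else 2 * payBound uL + 1) uL j

lemma mem_BR_antagonist {uL : Fin m → Fin n → ℝ} {S : Set (Fin n)} {x : Fin m → ℝ}
    (hx : x ∈ simplex m) {j j' : Fin n} (hj' : j' ∉ S) (hj : j ∈ BR (antagonist uL S) x) :
    j ∉ S ∧ pay uL x j ≤ pay uL x j' := by
  have hcmp : pay (antagonist uL S) x j' ≤ pay (antagonist uL S) x j := hj j'
  rw [pay_antagonist hx, pay_antagonist hx, if_neg hj'] at hcmp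
  have hjS : j ∉ S := by
    intro hjS
    rw [if_pos hjS] at hcmp
    linarith [abs_le.1 (abs_pay_le_payBound hx uL j), abs_le.1 (abs_pay_le_payBound hx uL j')]
  rw [if_neg hjS] at hcmp
  exact ⟨hjS, by linarith⟩

theorem exists_properCover_of_exists_cover_general {m n : ℕ} (hm : 0 < m)
    (uL : Fin m → Fin n → ℝ) (S : Set (Fin n)) (hS : S.Nonempty)
    (μ : Fin m → Fin n → ℝ) (hμ : IsCover uL μ S) :
    ∃ μ' : Fin m → Fin n → ℝ, IsProperCover uL μ' S := by
  have : Nonempty (Fin n) := ⟨hS.some⟩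
  obtain ⟨x₀, hx₀⟩ := argMM_nonempty hm uL hS
  obtain ⟨j₀, hj₀⟩ := BR_nonempty μ x₀
  refine ⟨antagonist uL S, fun x hx j hj => ?_, fun x hx j hjS hj => ?_⟩
  · obtain ⟨j₁, hj₁⟩ := BR_nonempty μ x
    have hle := (mem_BR_antagonist hx.1 (hμ.notMem_of_mem_BR hx hj₁) hj).2
    exact hle.trans_lt (hμ x hx j₁ hj₁)
  · exact (mem_BR_antagonist hx (hμ.notMem_of_mem_BR hx₀ hj₀) hj).1 hjS

/-- if a cover of S exists, then a proper cover of S exists. -/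
theorem exists_properCover_of_exists_cover {m n : ℕ} (hm : 0 < m) (hn : 0 < n)
    (uL : Fin m → Fin n → ℝ) (S : Set (Fin n)) (hS : S.Nonempty)
    (μ : Fin m → Fin n → ℝ) (hμ : IsCover uL μ S) :
    ∃ μ' : Fin m → Fin n → ℝ, IsProperCover uL μ' S :=
  exists_properCover_of_exists_cover_general hm uL S hS μ hμ
end
end

section
/- Suppose J ⊆ [n] and x* ∈ Δ_m satisfy u^L(x*,j) = M_J = M_{[n]} for all j ∈ J; suppose for every j ∈ [n] a vector ã_j ∈ ℝ^m is given such that either there exist γ_j > 0 and β_j ∈ ℝ with u^L(x,j) = γ_j·(ã_j·x) + β_j for all x ∈ Δ_m, or M_{{j}} = M_{[n]} and ã_j is the 0/1 indicator vector of I_j = argmax_{i∈[m]} u^L(i,j). Let k ∈ [n], y ∈ Δ_m with u^L(y,k) ≥ M_{[n]}, and define ũ^L(x,j) = ã_j·x − ã_j·x* for j ∈ J\{k}, ũ^L(x,k) = ã_k·x − ã_k·y, and ũ^L(x,j) = 1 for j ∉ J∪{k}. Then for every follower payoff function ũ^F : Fin m → Fin n → ℝ, if (y,k) is an SSE of (ũ^L,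 ũ^F), then (y,k) is an SSE of (u^L, ũ^F). -/
/-!
The surrogate payoff is normalised so that `ũ^L(y, k) = 0`; hence any response `(x', j')` that
is a best response for `ũ^F` has `ũ^L(x', j') ≤ 0`. This rules out `j' ∉ J ∪ {k}`, where
`ũ^L ≡ 1`, and otherwise says `ã_{j'} · x' ≤ ã_{j'} · z` with `z = y` or `z = x*`. In the affine
case this transfers to `u^L(x', j') ≤ u^L(z, j')`; in the indicator case `u^L(x', j')` is at
most `M_{{j'}} = M_{[n]}`. Either way `u^L(x', j') ≤ M_{[n]} ≤ u^L(y, k)`.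
-/

open scoped Classical
open Finset

noncomputable section

/-- The surrogate leader payoff ũ^L built from a, J, k, x*, y
(as a matrix; its linear extension to Δ_m gives exactly the formula in the paper). -/
def tuLdef {m n : ℕ} (a : Fin n → Fin m → ℝ) (J : Set (Fin n)) (k : Fin n)
    (xstar y : Fin m → ℝ) : Fin m → Fin n → ℝ :=
  fun i j =>
    if j = k then a k i - dot (a k) y
    else if j ∈ J then a j i - dot (a j) xstar
    else 1

lemma pay_le_Mval_singleton {m n : ℕ} (u : Fin m → Fin n → ℝ) (j : Fin n)
    {x : Fin m → ℝ} (hx : x ∈ simplex m) : pay u x j ≤ Mval u {j} := by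
  have himage : minOnS u {j} '' simplex m = (fun z => pay u z j) '' simplex m :=
    Set.image_congr fun z _ => by simp [minOnS]
  rw [Mval, himage]
  refine le_csSup (IsCompact.bddAbove_image (isCompact_stdSimplex ℝ (Fin m)) ?_) ⟨x, hx, rfl⟩
  unfold pay
  fun_prop

lemma sum_mul_sub_const_of_mem_simplex {m : ℕ} (b : Fin m → ℝ) (c : ℝ) {x : Fin m → ℝ}
    (hx : x ∈ simplex m) : ∑ i, x i * (b i - c) = dot b x - c := by
  rw [sum_congr rfl fun i _ => mul_sub (x i) (b i) c, sum_sub_distrib, ← sum_mul, hx.2, one_mul]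
  simp only [dot, mul_comm]

section Surrogate

variable {m n : ℕ} (a : Fin n → Fin m → ℝ) (J : Set (Fin n)) (xstar y : Fin m → ℝ)
  {x : Fin m → ℝ}

lemma pay_tuLdef_self (k : Fin n) (hx : x ∈ simplex m) :
    pay (tuLdef a J k xstar y) x k = dot (a k) x - dot (a k) y := by
  simp only [pay, tuLdef]
  exact sum_mul_sub_const_of_mem_simplex _ _ hx

lemma pay_tuLdef_of_mem {j k : Fin n} (hjk : j ≠ k) (hj : j ∈ J) (hx : x ∈ simplex m) :
    pay (tuLdef a J k xstar y) x j = dot (a j) x - dot (a j) xstar := by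
  simp only [pay, tuLdef, if_neg hjk, if_pos hj]
  exact sum_mul_sub_const_of_mem_simplex _ _ hx

lemma pay_tuLdef_of_notMem {j k : Fin n} (hjk : j ≠ k) (hj : j ∉ J) (hx : x ∈ simplex m) :
    pay (tuLdef a J k xstar y) x j = 1 := by
  simp only [pay, tuLdef, if_neg hjk, if_neg hj, mul_one]
  exact hx.2

end Surrogate

lemma pay_le_of_dot_le {m n : ℕ} {uL : Fin m → Fin n → ℝ} {a : Fin m → ℝ} {j : Fin n}
    (ha : (∃ γ : ℝ, 0 < γ ∧ ∃ β : ℝ, ∀ x ∈ simplex m, pay uL x j = γ * dot a x + β) ∨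
      Mval uL {j} = Mval uL Set.univ)
    {x z : Fin m → ℝ} (hx : x ∈ simplex m) (hz : z ∈ simplex m)
    (hdot : dot a x ≤ dot a z) (hMz : Mval uL Set.univ ≤ pay uL z j) :
    pay uL x j ≤ pay uL z j := by
  rcases ha with ⟨γ, hγ, β, hlin⟩ | hM
  · rw [hlin x hx, hlin z hz]
    gcongr
  · calc pay uL x j ≤ Mval uL {j} := pay_le_Mval_singleton uL j hx
      _ = Mval uL Set.univ := hM
      _ ≤ pay uL z j := hMz

theorem sse_surrogate_implies_sse_true_general {m n : ℕ}
    (uL : Fin m → Fin n → ℝ)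
    (J : Set (Fin n))
    (xstar : Fin m → ℝ) (hxstar : xstar ∈ simplex m)
    (hJ : ∀ j ∈ J, pay uL xstar j = Mval uL J ∧ Mval uL J = Mval uL Set.univ)
    (a : Fin n → Fin m → ℝ)
    (ha : ∀ j : Fin n,
      (∃ γ : ℝ, 0 < γ ∧ ∃ β : ℝ, ∀ x ∈ simplex m, pay uL x j = γ * dot (a j) x + β) ∨
      (Mval uL {j} = Mval uL Set.univ ∧
        a j = fun i => if ∀ i' : Fin m, uL i' j ≤ uL i j then (1 : ℝ) else 0))
    (k : Fin n) (y : Fin m → ℝ)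
    (hyk : Mval uL Set.univ ≤ pay uL y k) :
    ∀ uF : Fin m → Fin n → ℝ,
      SSE (tuLdef a J k xstar y) uF y k → SSE uL uF y k := by
  rintro uF ⟨hy, hBR, hmax⟩
  refine ⟨hy, hBR, fun x hx j hj => ?_⟩
  have hsur := hmax x hx j hj
  have ha' := (ha j).imp_right And.left
  rw [pay_tuLdef_self a J xstar y k hy, sub_self] at hsur
  rcases eq_or_ne j k with rfl | hjk
  · rw [pay_tuLdef_self a J xstar y j hx] at hsur
    exact pay_le_of_dot_le ha' hx hy (by linarith) hyk
  by_cases hjJ : j ∈ J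
  · obtain ⟨hval, hM⟩ := hJ j hjJ
    rw [pay_tuLdef_of_mem a J xstar y hjk hjJ hx] at hsur
    calc pay uL x j ≤ pay uL xstar j :=
          pay_le_of_dot_le ha' hx hxstar (by linarith) (by rw [hval, hM])
      _ = Mval uL Set.univ := hval.trans hM
      _ ≤ pay uL y k := hyk
  · rw [pay_tuLdef_of_notMem a J xstar y hjk hjJ hx] at hsur
    norm_num at hsur

/-- any SSE witness (y,k) for the surrogate game (ũ^L, ũ^F)
is also an SSE of the true game (u^L, ũ^F). -/
theorem sse_surrogate_implies_sse_true {m n : ℕ}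
    (uL : Fin m → Fin n → ℝ)
    (J : Set (Fin n)) (hJne : J.Nonempty)
    (xstar : Fin m → ℝ) (hxstar : xstar ∈ simplex m)
    (hJ : ∀ j ∈ J, pay uL xstar j = Mval uL J ∧ Mval uL J = Mval uL Set.univ)
    (a : Fin n → Fin m → ℝ)
    (ha : ∀ j : Fin n,
      (∃ γ : ℝ, 0 < γ ∧ ∃ β : ℝ, ∀ x ∈ simplex m, pay uL x j = γ * dot (a j) x + β) ∨
      (Mval uL {j} = Mval uL Set.univ ∧
        a j = fun i => if ∀ i' : Fin m, uL i' j ≤ uL i j then (1 : ℝ) else 0))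
    (k : Fin n) (y : Fin m → ℝ) (hy : y ∈ simplex m)
    (hyk : Mval uL Set.univ ≤ pay uL y k) :
    ∀ uF : Fin m → Fin n → ℝ,
      SSE (tuLdef a J k xstar y) uF y k → SSE uL uF y k :=
  sse_surrogate_implies_sse_true_general uL J xstar hxstar hJ a ha k y hyk
end
end

section
/- Assume 1 < m₁ ≤ m, u^L(i,n) = M_{{n}} for all i ∈ {m₁,…,m}, and u^L(i,n) < M_{{n}} for all i ∈ {1,…,m₁−1}, where M_{{n}} = max_{i∈[m]} u^L(i,n). Suppose x^1,…,x^{m₁−1} ∈ Δ_m satisfy: (a) u^L(x^1,n) = ⋯ = u^L(x^{m₁−1},n); (b) x^i_i > 0 for all i ∈ [m₁−1]; and (c) 1 − x^i_i = Σ_{k=m₁}^m x^i_k for all i ∈ [m₁−1]. Let b = (−1/x^1_1, −1/x^2_2, …, −1/x^{m₁−1}_{m₁−1}, 0, …, 0) ∈ ℝ^m. Then there exist γ > 0 and β ∈ ℝ such that u^L(x,n) = γ·(b·x) + β for all x ∈ Δ_m. -/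
open scoped Classical
open Finset

noncomputable section

/-
At a critical point `xⁱ` all mass outside the block `{m₁,…,m}`, where `u(·, n) = M`, sits on
action `i`, so `u(xⁱ, n) = M - xⁱᵢ (M - u(i, n))`. Condition (a) makes `γ := xⁱᵢ (M - u(i, n))`
independent of `i`, and `γ > 0`. Hence the vertex payoffs are `u(i, n) = γ bᵢ + M` for every
pure action `i` (with `bᵢ = 0` on that block), and linearity extends this to the whole simplex.
-/

section Simplex

variable {ι : Type*} [Fintype ι]

theorem sum_mul_eq_of_forall_eq_affine {x u b : ι → ℝ} {γ β : ℝ}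
    (hx : x ∈ stdSimplex ℝ ι) (hu : ∀ j, u j = γ * b j + β) :
    ∑ j, x j * u j = γ * ∑ j, b j * x j + β := by
  simp only [hu, mul_add, sum_add_distrib, ← sum_mul, hx.2, one_mul, mul_sum]
  congr 1
  exact sum_congr rfl fun j _ => by ring

variable [DecidableEq ι]

theorem eq_zero_of_stdSimplex_of_sum_insert {x : ι → ℝ} (hx : x ∈ stdSimplex ℝ ι)
    {i : ι} {H : Finset ι} (hi : i ∉ H) (hH : 1 - x i = ∑ k ∈ H, x k)
    {k : ι} (hk : k ∉ insert i H) : x k = 0 := by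
  have hcompl : ∑ k ∈ (insert i H)ᶜ, x k = 0 := by
    have := sum_add_sum_compl (insert i H) x
    rw [sum_insert hi, hx.2] at this
    linarith
  exact (sum_eq_zero_iff_of_nonneg fun k _ => hx.1 k).mp hcompl k (mem_compl.mpr hk)

theorem sum_mul_eq_of_stdSimplex_of_sum_insert {x u : ι → ℝ} {M : ℝ}
    (hx : x ∈ stdSimplex ℝ ι) {i : ι} {H : Finset ι} (hi : i ∉ H)
    (hH : 1 - x i = ∑ k ∈ H, x k) (huH : ∀ k ∈ H, u k = M) :
    ∑ k, x k * u k = M - x i * (M - u i) := by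
  have hdefect : ∑ k, x k * (M - u k) = x i * (M - u i) := by
    refine sum_eq_single i (fun k _ hki => ?_) (by simp)
    by_cases hkH : k ∈ H
    · rw [huH k hkH, sub_self, mul_zero]
    · rw [eq_zero_of_stdSimplex_of_sum_insert hx hi hH (by simp [hki, hkH]), zero_mul]
  calc ∑ k, x k * u k = M * ∑ k, x k - ∑ k, x k * (M - u k) := by
        rw [mul_sum, ← sum_sub_distrib]
        exact sum_congr rfl fun k _ => by ring
    _ = M - x i * (M - u i) := by rw [hx.2, hdefect, mul_one]

end Simplex

/-- Indices are 0-based: the paper's action i ∈ [m₁−1] is the index i with (i:ℕ) < m₁−1, and the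
paper's actions m₁,…,m are the indices k with m₁−1 ≤ (k:ℕ). -/
theorem gradient_from_critical_points {m n : ℕ}
    (uL : Fin m → Fin n → ℝ) (jn : Fin n)
    (m₁ : ℕ) (hm₁ : 1 < m₁) (hm₁m : m₁ ≤ m)
    (Mn : ℝ)
    (hhigh : ∀ i : Fin m, m₁ - 1 ≤ (i : ℕ) → uL i jn = Mn)
    (hlow : ∀ i : Fin m, (i : ℕ) < m₁ - 1 → uL i jn < Mn)
    (xs : Fin m → Fin m → ℝ)
    (hxsΔ : ∀ i : Fin m, (i : ℕ) < m₁ - 1 → xs i ∈ simplex m)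
    (hA : ∀ i i' : Fin m, (i : ℕ) < m₁ - 1 → (i' : ℕ) < m₁ - 1 →
      pay uL (xs i) jn = pay uL (xs i') jn)
    (hB : ∀ i : Fin m, (i : ℕ) < m₁ - 1 → 0 < xs i i)
    (hC : ∀ i : Fin m, (i : ℕ) < m₁ - 1 →
      1 - xs i i = ∑ k ∈ Finset.univ.filter (fun k : Fin m => m₁ - 1 ≤ (k : ℕ)), xs i k) :
    ∃ γ : ℝ, 0 < γ ∧ ∃ β : ℝ, ∀ x ∈ simplex m,
      pay uL x jn =
        γ * dot (fun i => if (i : ℕ) < m₁ - 1 then -1 / xs i i else 0) x + β := by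
  have hpay_critical : ∀ i : Fin m, (i : ℕ) < m₁ - 1 →
      pay uL (xs i) jn = Mn - xs i i * (Mn - uL i jn) := fun i hi =>
    sum_mul_eq_of_stdSimplex_of_sum_insert (hxsΔ i hi)
      (by simp only [mem_filter, mem_univ, true_and]; omega) (hC i hi)
      fun k hk => hhigh k (mem_filter.mp hk).2
  let i₀ : Fin m := ⟨0, by omega⟩
  have hi₀ : (i₀ : ℕ) < m₁ - 1 := by change 0 < m₁ - 1; omega
  refine ⟨xs i₀ i₀ * (Mn - uL i₀ jn), mul_pos (hB i₀ hi₀) (sub_pos.mpr (hlow i₀ hi₀)), Mn,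
    fun x hx => sum_mul_eq_of_forall_eq_affine hx fun j => ?_⟩
  split_ifs with hj
  · have hγ : xs j j * (Mn - uL j jn) = xs i₀ i₀ * (Mn - uL i₀ jn) := by
      linarith [hpay_critical j hj, hpay_critical i₀ hi₀, hA j i₀ hj hi₀]
    rw [← hγ]
    field_simp [(hB j hj).ne']
    ring
  · rw [mul_zero, zero_add]
    exact hhigh j (by omega)
end
end

section
/- With the construction of ũ_g^F below: for every g ∈ ℝ^{m₁−1}, every i ∈ [m₁−1], and every x ∈ Γ_i ∩ f_g^{-1}(n), one has x_i > 0. Moreover, if g_i > 0 then Γ_i ∩ f_g^{-1}(n) ≠ ∅. -/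
open scoped Classical
open Finset

noncomputable section

/-- The facet Γ_i = {x ∈ Δ_m : 1 − x_i = Σ_{k=m₁}^m x_k} (0-based indices: the paper's
actions m₁,…,m are the indices k with m₁−1 ≤ (k:ℕ)). -/
def GammaSet {m : ℕ} (m₁ : ℕ) (i : Fin m) : Set (Fin m → ℝ) :=
  {x ∈ simplex m |
    1 - x i = ∑ k ∈ Finset.univ.filter (fun k : Fin m => m₁ - 1 ≤ (k : ℕ)), x k}

/-- W = min_{i∈[m], j∈[n]} μ(i,j) − 1. -/
def Wmin {m n : ℕ} (μ : Fin m → Fin n → ℝ) : ℝ :=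
  sInf (Set.range fun p : Fin m × Fin n => μ p.1 p.2) - 1

/-- The follower payoff ũ_g^F (as a matrix; on Δ_m its linear extension is
ũ_g^F(x,j) = Σ_{i=m₁}^m x_i·μ(i,j) for j ≠ n and
ũ_g^F(x,n) = Σ_{i=1}^{m₁−1} x_i·g_i + W·Σ_{i=m₁}^m x_i). -/
def tuFg {m n : ℕ} (m₁ : ℕ) (μ : Fin m → Fin n → ℝ) (jn : Fin n) (g : Fin m → ℝ) :
    Fin m → Fin n → ℝ :=
  fun i j =>
    if j = jn then (if (i : ℕ) < m₁ - 1 then g i else Wmin μ)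
    else (if (i : ℕ) < m₁ - 1 then 0 else μ i j)

/-- f_g^{-1}(n) = {x ∈ Δ_m : n ∈ f_g(x)} where f_g is the BR-correspondence of ũ_g^F. -/
def finv {m n : ℕ} (m₁ : ℕ) (μ : Fin m → Fin n → ℝ) (jn : Fin n) (g : Fin m → ℝ) :
    Set (Fin m → ℝ) :=
  {x ∈ simplex m | jn ∈ BR (tuFg m₁ μ jn g) x}

/-! On the facet `Γ_i` the coordinates `x_1, …, x_{m₁-1}` sum to `x_i`, so `x_i = 0` forces `x`
onto the actions `m₁, …, m`, where `ũ_g^F(x, n) = W` lies strictly below every other follower payoff; such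
actions exist because a proper cover never makes `n` a best response. Conversely the vertex
`e_i` lies on `Γ_i` and there `ũ_g^F(e_i, n) = g_i ≥ 0 = ũ_g^F(e_i, j)` for `j ≠ n`. -/

section Payoffs

variable {m n : ℕ}

lemma pay_single (u : Fin m → Fin n → ℝ) (i : Fin m) (j : Fin n) :
    pay u (Pi.single i 1) j = u i j := by
  simp [pay, Pi.single_apply]

lemma le_pay_of_forall_le {u : Fin m → Fin n → ℝ} {x : Fin m → ℝ} (hx : x ∈ simplex m)
    {c : ℝ} {j : Fin n} (h : ∀ k, c ≤ u k j) : c ≤ pay u x j :=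
  calc c = ∑ k, x k * c := by rw [← Finset.sum_mul, hx.2, one_mul]
    _ ≤ pay u x j := Finset.sum_le_sum fun k _ => mul_le_mul_of_nonneg_left (h k) (hx.1 k)

lemma pay_eq_of_forall_eq {u : Fin m → Fin n → ℝ} {x : Fin m → ℝ} (hx : x ∈ simplex m)
    {c : ℝ} {j : Fin n} (h : ∀ k, x k ≠ 0 → u k j = c) : pay u x j = c :=
  calc pay u x j = ∑ k, x k * c :=
        Finset.sum_congr rfl fun k _ => by
          rcases eq_or_ne (x k) 0 with hk | hk
          · simp [hk]
          · rw [h k hk]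
    _ = c := by rw [← Finset.sum_mul, hx.2, one_mul]

lemma exists_ne_of_isProperCover {uL μ : Fin m → Fin n → ℝ} {jn : Fin n}
    (hμ : IsProperCover uL μ {jn}) (i : Fin m) : ∃ j, j ≠ jn := by
  by_contra! h
  exact hμ.2 _ (single_mem_stdSimplex ℝ i) jn rfl fun j => by rw [h j]

lemma Wmin_add_one_le (μ : Fin m → Fin n → ℝ) (k : Fin m) (j : Fin n) :
    Wmin μ + 1 ≤ μ k j := by
  simpa [Wmin] using csInf_le (Set.finite_range _).bddBelow ⟨(k, j), rfl⟩

end Payoffs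

section Facet

variable {m : ℕ} {m₁ : ℕ} {i : Fin m} {x : Fin m → ℝ}

lemma GammaSet.sum_low_eq (hx : x ∈ GammaSet m₁ i) :
    ∑ k ∈ Finset.univ.filter (fun k : Fin m => ¬ m₁ - 1 ≤ (k : ℕ)), x k = x i := by
  have hsplit := Finset.sum_filter_add_sum_filter_not Finset.univ
    (fun k : Fin m => m₁ - 1 ≤ (k : ℕ)) x
  rw [hx.1.2, ← hx.2] at hsplit
  linarith

lemma GammaSet.eq_zero_of_lt (hx : x ∈ GammaSet m₁ i) (hxi : x i = 0) {k : Fin m}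
    (hk : (k : ℕ) < m₁ - 1) : x k = 0 :=
  (Finset.sum_eq_zero_iff_of_nonneg fun k _ => hx.1.1 k).1 (hxi ▸ GammaSet.sum_low_eq hx) k
    (by simp only [tsub_le_iff_right, not_le, mem_filter, mem_univ, true_and]; omega)

lemma single_mem_GammaSet (hi : (i : ℕ) < m₁ - 1) : Pi.single i 1 ∈ GammaSet m₁ i := by
  refine ⟨single_mem_stdSimplex ℝ i, ?_⟩
  rw [Finset.sum_eq_zero fun k hk => Pi.single_eq_of_ne (by
    rintro rfl; simp only [tsub_le_iff_right, mem_filter, mem_univ, true_and] at hk; omega) _]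
  simp

end Facet

section FollowerPayoff

variable {m n : ℕ} {m₁ : ℕ} {μ : Fin m → Fin n → ℝ} {jn : Fin n} {g x : Fin m → ℝ}

lemma pay_tuFg_self_of_low_eq_zero (hx : x ∈ simplex m)
    (hlow : ∀ k : Fin m, (k : ℕ) < m₁ - 1 → x k = 0) :
    pay (tuFg m₁ μ jn g) x jn = Wmin μ :=
  pay_eq_of_forall_eq hx fun k hk => by
    simp [tuFg, show ¬ (k : ℕ) < m₁ - 1 from fun h => hk (hlow k h)]

lemma Wmin_lt_pay_tuFg_of_low_eq_zero (hx : x ∈ simplex m)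
    (hlow : ∀ k : Fin m, (k : ℕ) < m₁ - 1 → x k = 0) {j : Fin n} (hj : j ≠ jn) :
    Wmin μ < pay (tuFg m₁ μ jn g) x j := by
  have hge : Wmin μ + 1 ≤ pay (tuFg m₁ μ jn g) x j := by
    rw [show pay (tuFg m₁ μ jn g) x j = pay μ x j from
      Finset.sum_congr rfl fun k _ => by
        by_cases hk : (k : ℕ) < m₁ - 1 <;> simp [tuFg, hj, hk, hlow]]
    exact le_pay_of_forall_le hx fun k => Wmin_add_one_le μ k j
  linarith

lemma pos_of_mem_GammaSet_inter_finv {i : Fin m} {j₀ : Fin n} (hj₀ : j₀ ≠ jn)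
    (hx : x ∈ GammaSet m₁ i ∩ finv m₁ μ jn g) : 0 < x i := by
  obtain ⟨hxΓ, hxs, hxBR⟩ := hx
  refine lt_of_le_of_ne (hxs.1 i) fun hxi => ?_
  have hlow := fun k => GammaSet.eq_zero_of_lt hxΓ hxi.symm (k := k)
  have hbest := hxBR j₀
  rw [pay_tuFg_self_of_low_eq_zero hxs hlow] at hbest
  exact hbest.not_gt (Wmin_lt_pay_tuFg_of_low_eq_zero hxs hlow hj₀)

lemma single_mem_finv {i : Fin m} (hi : (i : ℕ) < m₁ - 1) (hg : 0 ≤ g i) :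
    Pi.single i 1 ∈ finv m₁ μ jn g := by
  refine ⟨single_mem_stdSimplex ℝ i, fun j => ?_⟩
  rw [pay_single, pay_single]
  by_cases hj : j = jn <;> simp [tuFg, hj, hi, hg]

end FollowerPayoff

theorem xi_pos_and_nonempty_general {m n : ℕ}
    (uL : Fin m → Fin n → ℝ) (jn : Fin n)
    (m₁ : ℕ)
    (μ : Fin m → Fin n → ℝ) (hμ : IsProperCover uL μ {jn})
    (g : Fin m → ℝ) (i : Fin m) (hi : (i : ℕ) < m₁ - 1) :
    (∀ x ∈ GammaSet m₁ i ∩ finv m₁ μ jn g, 0 < x i) ∧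
      (0 < g i → (GammaSet m₁ i ∩ finv m₁ μ jn g).Nonempty) := by
  obtain ⟨j₀, hj₀⟩ := exists_ne_of_isProperCover hμ i
  exact ⟨fun x hx => pos_of_mem_GammaSet_inter_finv hj₀ hx,
    fun hg => ⟨_, single_mem_GammaSet hi, single_mem_finv hi hg.le⟩⟩

/-- for every g and every i ∈ [m₁−1], every x ∈ Γ_i ∩ f_g^{-1}(n) has x_i > 0;
moreover, if g_i > 0 then Γ_i ∩ f_g^{-1}(n) ≠ ∅. -/
theorem xi_pos_and_nonempty {m n : ℕ}
    (uL : Fin m → Fin n → ℝ) (jn : Fin n)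
    (m₁ : ℕ) (hm₁ : 1 < m₁) (hm₁m : m₁ ≤ m)
    (Mn : ℝ)
    (hhigh : ∀ i : Fin m, m₁ - 1 ≤ (i : ℕ) → uL i jn = Mn)
    (hlow : ∀ i : Fin m, (i : ℕ) < m₁ - 1 → uL i jn < Mn)
    (μ : Fin m → Fin n → ℝ) (hμ : IsProperCover uL μ {jn})
    (g : Fin m → ℝ) (i : Fin m) (hi : (i : ℕ) < m₁ - 1) :
    (∀ x ∈ GammaSet m₁ i ∩ finv m₁ μ jn g, 0 < x i) ∧
      (0 < g i → (GammaSet m₁ i ∩ finv m₁ μ jn g).Nonempty) :=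
  xi_pos_and_nonempty_general uL jn m₁ μ hμ g i hi
end
end
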